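/- arXiv:1512.08995 — 6 statements merged into one kernel-verified Lean document; each statement's English description precedes it below -/
import Mathlib

section
/- There exists a bipartite edge-group instance in which every vertex has group count at most 2 (that is, D = 2, where D is the maximum over all vertices of the number of distinct groups with an edge at that vertex), but which admits no valid coloring using only 2 colors. -/
/-- Three pairwise distinct elements of a set of size ≤ 2 give a contradiction. -/
lemma three_distinct_not_subset {x y z : ℕ} {s : Finset ℕ} (hxy : x ≠ y) (hyz : y ≠ z)
    (hxz : x ≠ z) (hx : x ∈ s) (hy : y ∈ s) (hz : z ∈ s) (hs : s.card ≤ 2) : False := by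
  have hsub : ({x, y, z} : Finset ℕ) ⊆ s := by
    intro a ha
    simp only [Finset.mem_insert, Finset.mem_singleton] at ha
    rcases ha with rfl | rfl | rfl <;> assumption
  have h3 : ({x, y, z} : Finset ℕ).card = 3 := by
    rw [Finset.card_insert_of_notMem (by simp [hxy, hxz]),
      Finset.card_insert_of_notMem (by simp [hyz]), Finset.card_singleton]
  have := Finset.card_le_card hsub
  omega

/-- There exists a bipartite edge-group instance in which every vertex
has group count at most 2 (indeed `D = 2`, where `D` is the maximum over all vertices of
the number of distinct groups with an edge at that vertex), but which admits no valid
coloring using only 2 colors. -/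
theorem exists_edge_group_instance_D_two_not_two_colorable :
    ∃ (ni no ng : ℕ) (E : Finset (Fin ni × Fin no)) (grp : Fin ni × Fin no → Fin ng),
      (∀ e ∈ E, ∀ e' ∈ E, grp e = grp e' → e.1 = e'.1) ∧
      (max (Finset.univ.sup fun u : Fin ni =>
              ((E.filter fun e => e.1 = u).image grp).card)
           (Finset.univ.sup fun v : Fin no =>
              ((E.filter fun e => e.2 = v).image grp).card) = 2) ∧
      ¬ ∃ c : Fin ni × Fin no → ℕ,
          (∀ e ∈ E, ∀ e' ∈ E, e ≠ e' → (e.1 = e'.1 ∨ e.2 = e'.2) →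
            grp e ≠ grp e' → c e ≠ c e') ∧
          (E.image c).card ≤ 2 := by
  refine ⟨2, 3, 4, {(0,0),(0,1),(0,2),(1,2),(1,0)},
    fun e => if e = (0,1) then 1 else if e = (1,2) then 2 else if e = (1,0) then 3 else 0,
    by decide, by decide, ?_⟩
  rintro ⟨c, hv, hc⟩
  -- conflict 5-cycle: (0,0)-(0,1)-(0,2)-(1,2)-(1,0)-(0,0)
  have h1 : c (0,0) ≠ c (0,1) := hv (0,0) (by decide) (0,1) (by decide) (by decide)
    (Or.inl rfl) (by decide)
  have h2 : c (0,1) ≠ c (0,2) := hv (0,1) (by decide) (0,2) (by decide) (by decide)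
    (Or.inl rfl) (by decide)
  have h3 : c (0,2) ≠ c (1,2) := hv (0,2) (by decide) (1,2) (by decide) (by decide)
    (Or.inr rfl) (by decide)
  have h4 : c (1,2) ≠ c (1,0) := hv (1,2) (by decide) (1,0) (by decide) (by decide)
    (Or.inl rfl) (by decide)
  have h5 : c (1,0) ≠ c (0,0) := hv (1,0) (by decide) (0,0) (by decide) (by decide)
    (Or.inr rfl) (by decide)
  have m1 := Finset.mem_image_of_mem c (show ((0,0) : Fin 2 × Fin 3) ∈
    ({(0,0),(0,1),(0,2),(1,2),(1,0)} : Finset (Fin 2 × Fin 3)) by decide)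
  have m2 := Finset.mem_image_of_mem c (show ((0,1) : Fin 2 × Fin 3) ∈
    ({(0,0),(0,1),(0,2),(1,2),(1,0)} : Finset (Fin 2 × Fin 3)) by decide)
  have m3 := Finset.mem_image_of_mem c (show ((0,2) : Fin 2 × Fin 3) ∈
    ({(0,0),(0,1),(0,2),(1,2),(1,0)} : Finset (Fin 2 × Fin 3)) by decide)
  have m4 := Finset.mem_image_of_mem c (show ((1,2) : Fin 2 × Fin 3) ∈
    ({(0,0),(0,1),(0,2),(1,2),(1,0)} : Finset (Fin 2 × Fin 3)) by decide)
  have m5 := Finset.mem_image_of_mem c (show ((1,0) : Fin 2 × Fin 3) ∈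
    ({(0,0),(0,1),(0,2),(1,2),(1,0)} : Finset (Fin 2 × Fin 3)) by decide)
  -- only ≤ 2 colors: walk around the odd cycle
  have hd : c (0,2) = c (0,0) := by
    by_contra h
    exact three_distinct_not_subset h1 h2 (fun e => h e.symm) m1 m2 m3 hc
  have hf : c (1,2) = c (0,1) := by
    by_contra h
    exact three_distinct_not_subset (fun e => h1 e.symm) (by rw [← hd]; exact h3)
      (fun e => h e.symm) m2 m1 m4 hc
  have hg : c (1,0) = c (0,0) := by
    by_contra h
    exact three_distinct_not_subset h1 (by rw [← hf]; exact h4) (fun e => h e.symm) m1 m2 m5 hc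
  exact h5 hg
end

section
/- Let G = (V, E) be a finite simple graph and k ≥ 1 an integer. Construct a bipartite edge-group instance as follows: the inputs are the vertices V; the outputs are the edges E of G together with k−1 new stub outputs for each vertex; for each edge e = {u,v} of G there are instance edges (u, e) and (v, e); for each vertex v and each of its k−1 stub outputs s there is a stub edge (v, s). At each input v, all instance edges of the form (v, e) with e ∈ E form a single group, and each stub edge forms its own singleton group. Then G has a proper vertex coloring with at most k colors if and only if the constructed instance has a valid edge-group coloring with at most k colors. -/
/-- Group map for the reduction from vertex coloring to edge-group coloring: the edges
`(v, Sum.inl e)` coming from edges of the original graph form a single group `Sum.inl v`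
at each input `v`, while each stub edge `(v, Sum.inr (v, i))` forms its own singleton
group `Sum.inr (v, i)`. -/
def reductionGrp {V : Type*} (k : ℕ) :
    V × (Sym2 V ⊕ V × Fin (k - 1)) → V ⊕ V × Fin (k - 1)
  | (v, Sum.inl _) => Sum.inl v
  | (_, Sum.inr s) => Sum.inr s

/-- Edge set of the instance constructed from a simple graph `G` and `k ≥ 1`: the inputs
are the vertices of `G`; the outputs are the potential edges (elements of `Sym2 V`)
together with `k - 1` stub outputs `(v, i)` for each vertex `v`.  For each edge `e` of
`G` and each endpoint `u ∈ e` there is an instance edge `(u, Sum.inl e)`, and for each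
vertex `v` and stub `(v, i)` there is a stub edge `(v, Sum.inr (v, i))`. -/
def reductionEdges {V : Type*} [Fintype V] [DecidableEq V]
    (G : SimpleGraph V) [DecidableRel G.Adj] (k : ℕ) :
    Finset (V × (Sym2 V ⊕ V × Fin (k - 1))) :=
  ((Finset.univ.filter fun p : V × V => G.Adj p.1 p.2).image
      fun p => (p.1, Sum.inl s(p.1, p.2))) ∪
    (Finset.univ.image fun s : V × Fin (k - 1) => (s.1, Sum.inr s))

section
variable {V : Type*} [Fintype V] [DecidableEq V]
    (G : SimpleGraph V) [DecidableRel G.Adj] (k : ℕ)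

lemma mem_inl {u w : V} (h : G.Adj u w) :
    (u, (Sum.inl s(u,w) : Sym2 V ⊕ V × Fin (k-1))) ∈ reductionEdges G k := by
  apply Finset.mem_union_left
  exact Finset.mem_image.2 ⟨(u,w), Finset.mem_filter.2 ⟨Finset.mem_univ _, h⟩, rfl⟩

lemma mem_inr (v : V) (i : Fin (k-1)) :
    (v, (Sum.inr (v,i) : Sym2 V ⊕ V × Fin (k-1))) ∈ reductionEdges G k := by
  apply Finset.mem_union_right
  exact Finset.mem_image.2 ⟨(v,i), Finset.mem_univ _, rfl⟩

lemma inl_mem {a : V} {s : Sym2 V}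
    (h : (a, (Sum.inl s : Sym2 V ⊕ V × Fin (k-1))) ∈ reductionEdges G k) :
    ∃ w, G.Adj a w ∧ s = s(a,w) := by
  rcases Finset.mem_union.1 h with h | h
  · rcases Finset.mem_image.1 h with ⟨p, hp, heq⟩
    have hadj := (Finset.mem_filter.1 hp).2
    obtain ⟨h1, h2⟩ := Prod.mk.injEq .. ▸ heq
    exact ⟨p.2, h1 ▸ hadj, (Sum.inl.injEq .. ▸ h2).symm ▸ (by rw [← h1])⟩
  · rcases Finset.mem_image.1 h with ⟨p, _, heq⟩
    simp at heq

lemma inr_mem {a : V} {t : V × Fin (k-1)}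
    (h : (a, (Sum.inr t : Sym2 V ⊕ V × Fin (k-1))) ∈ reductionEdges G k) :
    t.1 = a := by
  rcases Finset.mem_union.1 h with h | h
  · rcases Finset.mem_image.1 h with ⟨p, _, heq⟩
    simp at heq
  · rcases Finset.mem_image.1 h with ⟨p, _, heq⟩
    obtain ⟨h1, h2⟩ := Prod.mk.injEq .. ▸ heq
    have := Sum.inr.injEq .. ▸ h2
    rw [← this, h1]

lemma fwd (hk : 1 ≤ k) (f : V → Fin k) (hf : ∀ u v : V, G.Adj u v → f u ≠ f v) :
    (∃ c : V × (Sym2 V ⊕ V × Fin (k - 1)) → ℕ,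
      (∀ e ∈ reductionEdges G k, ∀ e' ∈ reductionEdges G k, e ≠ e' →
        (e.1 = e'.1 ∨ e.2 = e'.2) →
        reductionGrp k e ≠ reductionGrp k e' → c e ≠ c e') ∧
      ((reductionEdges G k).image c).card ≤ k) := by
  refine ⟨fun p => Sum.elim (fun _ => (f p.1 : ℕ))
    (fun s => if (s.2 : ℕ) < (f p.1 : ℕ) then (s.2 : ℕ) else (s.2 : ℕ) + 1) p.2, ?_, ?_⟩
  · rintro ⟨a, x⟩ he ⟨b, y⟩ he' hne hsh hg
    match x, y with
    | Sum.inl s, Sum.inl t =>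
      simp only [reductionGrp, ne_eq, Sum.inl.injEq] at hg
      have hxy : (Sum.inl s : Sym2 V ⊕ V × Fin (k-1)) = Sum.inl t := by
        rcases hsh with h | h
        · exact absurd h hg
        · exact h
      have hst : s = t := Sum.inl.inj hxy
      obtain ⟨w, hw, hsw⟩ := inl_mem G k he
      obtain ⟨w', hw', htw⟩ := inl_mem G k he'
      -- s = s(a,w) = t = s(b,w'), a ≠ b, so b = w
      have hbs : b ∈ s := by rw [hst, htw]; exact Sym2.mem_mk_left b w'
      have : b = a ∨ b = w := by
        rw [hsw] at hbs; exact Sym2.mem_iff.1 hbs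
      have hbw : b = w := this.resolve_left (fun h => hg h.symm)
      have hadj : G.Adj a b := hbw ▸ hw
      simp only [Sum.elim_inl, ne_eq, Nat.cast_injective]
      exact fun hc => hf a b hadj (Fin.ext hc)
    | Sum.inl s, Sum.inr t =>
      have hab : a = b := by
        rcases hsh with h | h
        · exact h
        · simp at h
      have ht1 : t.1 = b := inr_mem G k he'
      simp only [Sum.elim_inl, Sum.elim_inr, hab]
      split
      · omega
      · omega
    | Sum.inr s, Sum.inl t =>
      have hab : a = b := by
        rcases hsh with h | h
        · exact h
        · simp at h
      simp only [Sum.elim_inl, Sum.elim_inr, hab]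
      split
      · omega
      · omega
    | Sum.inr s, Sum.inr t =>
      have hab : a = b := by
        rcases hsh with h | h
        · exact h
        · simp only [Sum.inr.injEq] at h
          exfalso
          apply hg
          simp [reductionGrp, h]
      have hs1 : s.1 = a := inr_mem G k he
      have ht1 : t.1 = b := inr_mem G k he'
      have hst : s ≠ t := by
        intro h
        exact hne (by rw [hab, h])
      have hij : (s.2 : ℕ) ≠ (t.2 : ℕ) := by
        intro h
        apply hst
        have : s.2 = t.2 := Fin.ext h
        exact Prod.ext (by rw [hs1, ht1, hab]) this
      simp only [Sum.elim_inr, hab]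
      split <;> split <;> omega
  · calc ((reductionEdges G k).image _).card
        ≤ (Finset.range k).card := by
          apply Finset.card_le_card
          intro n hn
          rcases Finset.mem_image.1 hn with ⟨⟨a, x⟩, hmem, rfl⟩
          rcases x with s | t
          · simp only [Sum.elim_inl, Finset.mem_range]; exact (f a).isLt
          · have := t.2.isLt
            simp only [Sum.elim_inr, Finset.mem_range]
            have hfa := (f a).isLt
            split <;> omega
      _ = k := Finset.card_range k

lemma bwd (hk : 1 ≤ k)
    (c : V × (Sym2 V ⊕ V × Fin (k - 1)) → ℕ)
    (hval : ∀ e ∈ reductionEdges G k, ∀ e' ∈ reductionEdges G k, e ≠ e' →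
        (e.1 = e'.1 ∨ e.2 = e'.2) →
        reductionGrp k e ≠ reductionGrp k e' → c e ≠ c e')
    (hcard : ((reductionEdges G k).image c).card ≤ k) :
    ∃ f : V → Fin k, ∀ u v : V, G.Adj u v → f u ≠ f v := by
  set C := (reductionEdges G k).image c with hC
  have key : ∀ u w w', G.Adj u w → G.Adj u w' →
      c (u, Sum.inl s(u,w)) = c (u, Sum.inl s(u,w')) := by
    intro u w w' hw hw'
    set T : Finset ℕ := Finset.univ.image fun i : Fin (k-1) => c (u, Sum.inr (u,i)) with hT
    have hTcard : T.card = k - 1 := by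
      rw [hT, Finset.card_image_of_injective _ ?_, Finset.card_univ, Fintype.card_fin]
      intro i j hij
      by_contra hne
      exact hval (u, Sum.inr (u,i)) (mem_inr G k u i) (u, Sum.inr (u,j)) (mem_inr G k u j)
        (by simp [hne]) (Or.inl rfl) (by simp [reductionGrp, hne]) hij
    have hTsub : T ⊆ C := by
      intro n hn
      rcases Finset.mem_image.1 hn with ⟨i, _, rfl⟩
      exact Finset.mem_image_of_mem c (mem_inr G k u i)
    have hnotT : ∀ x, G.Adj u x → c (u, Sum.inl s(u,x)) ∉ T := by
      intro x hx hmem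
      rcases Finset.mem_image.1 hmem with ⟨i, _, hi⟩
      exact hval (u, Sum.inl s(u,x)) (mem_inl G k hx) (u, Sum.inr (u,i)) (mem_inr G k u i)
        (by simp) (Or.inl rfl) (by simp [reductionGrp]) hi.symm
    have hmemC : ∀ x, G.Adj u x → c (u, Sum.inl s(u,x)) ∈ C \ T := fun x hx =>
      Finset.mem_sdiff.2 ⟨Finset.mem_image_of_mem c (mem_inl G k hx), hnotT x hx⟩
    have hsd : (C \ T).card ≤ 1 := by
      rw [Finset.card_sdiff_of_subset hTsub, hTcard]
      omega
    exact Finset.card_le_one.1 hsd _ (hmemC w hw) _ (hmemC w' hw')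
  -- raw color of a vertex
  classical
  set col : V → ℕ := fun v =>
    if h : ∃ w, G.Adj v w then c (v, Sum.inl s(v, Classical.choose h)) else 0 with hcol
  have hcolC : ∀ v w, G.Adj v w → col v ∈ C ∧ col v = c (v, Sum.inl s(v,w)) := by
    intro v w hw
    have hex : ∃ x, G.Adj v x := ⟨w, hw⟩
    have : col v = c (v, Sum.inl s(v, Classical.choose hex)) := by
      rw [hcol]; simp [hex]
    rw [this, key v (Classical.choose hex) w (Classical.choose_spec hex) hw]
    exact ⟨Finset.mem_image_of_mem c (mem_inl G k hw), rfl⟩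
  have hne : ∀ u v, G.Adj u v → col u ≠ col v := by
    intro u v huv
    rw [(hcolC u v huv).2, (hcolC v u huv.symm).2]
    have : s(v,u) = s(u,v) := Sym2.eq_swap
    rw [this]
    exact hval (u, Sum.inl s(u,v)) (mem_inl G k huv) (v, Sum.inl s(u,v))
      (by have := mem_inl G k huv.symm; rwa [Sym2.eq_swap] at this)
      (by simp [huv.ne]) (Or.inr rfl) (by simp [reductionGrp, huv.ne])
  -- convert to Fin k
  have hCk : C.card ≤ k := hcard
  refine ⟨fun v => if h : col v ∈ C then Fin.castLE hCk (C.equivFin ⟨col v, h⟩) else ⟨0, hk⟩,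
    ?_⟩
  intro u v huv
  have hu : col u ∈ C := (hcolC u v huv).1
  have hv : col v ∈ C := (hcolC v u huv.symm).1
  simp only [dif_pos hu, dif_pos hv]
  intro h
  have h2 : C.equivFin ⟨col u, hu⟩ = C.equivFin ⟨col v, hv⟩ :=
    Fin.castLE_injective hCk h
  have h3 : (⟨col u, hu⟩ : {x // x ∈ C}) = ⟨col v, hv⟩ := C.equivFin.injective h2
  exact hne u v huv (Subtype.mk.injEq .. ▸ h3)

end

/-- A finite simple graph `G` has a proper vertex coloring with at most
`k` colors (`k ≥ 1`) if and only if the bipartite edge-group instance obtained from `G`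
by the stub construction has a valid edge-group coloring using at most `k` colors. -/
theorem vertex_coloring_iff_edge_group_coloring
    {V : Type*} [Fintype V] [DecidableEq V]
    (G : SimpleGraph V) [DecidableRel G.Adj] (k : ℕ) (hk : 1 ≤ k) :
    (∃ f : V → Fin k, ∀ u v : V, G.Adj u v → f u ≠ f v) ↔
    (∃ c : V × (Sym2 V ⊕ V × Fin (k - 1)) → ℕ,
      (∀ e ∈ reductionEdges G k, ∀ e' ∈ reductionEdges G k, e ≠ e' →
        (e.1 = e'.1 ∨ e.2 = e'.2) →
        reductionGrp k e ≠ reductionGrp k e' → c e ≠ c e') ∧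
      ((reductionEdges G k).image c).card ≤ k) := by
  constructor
  · rintro ⟨f, hf⟩
    exact fwd G k hk f hf
  · rintro ⟨c, h1, h2⟩
    exact bwd G k hk c h1 h2
end

section
/- Let A = {a_1, …, a_t} be a finite set with t ≥ 1 and S = {S_1, …, S_p} a collection of p subsets of A such that every element of A lies in at least p − q of the subsets, for some integer q ≥ 0 with q < p. Let k ≥ 1 be an integer with p > q · t^{1/k}. Then any greedy covering sequence (a sequence of subsets chosen from S in which each chosen subset covers the maximum possible number of elements not covered by the previously chosen subsets, continuing until all of A is covered) covers all of A using at most k subsets. -/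
/-- Let `A` be a finite set with `|A| = t ≥ 1` and `S : Fin p → Finset α`
a collection of `p` subsets of `A` such that every element of `A` lies in at least
`p - q` of the subsets, where `0 ≤ q < p`.  Let `k ≥ 1` with `p > q · t^{1/k}` (real
`k`-th root).  Then any greedy covering sequence — a sequence `g 0, g 1, …` of chosen
subsets each of which covers the maximum possible number of elements not covered by the
previously chosen subsets, continuing exactly until all of `A` is covered (say after `h`
steps) — covers all of `A` using at most `k` subsets, i.e. `h ≤ k`. -/
theorem greedy_set_cover_bound
    {α : Type*} [DecidableEq α]
    (A : Finset α) (t p q k : ℕ)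
    (ht : A.card = t) (ht1 : 1 ≤ t) (hq : q < p) (hk : 1 ≤ k)
    (S : Fin p → Finset α) (hS : ∀ i : Fin p, S i ⊆ A)
    (hcov : ∀ a ∈ A, p - q ≤ (Finset.univ.filter fun i : Fin p => a ∈ S i).card)
    (hpk : (q : ℝ) * (t : ℝ) ^ (1 / (k : ℝ)) < (p : ℝ))
    (h : ℕ) (g : ℕ → Fin p)
    (hgreedy : ∀ i < h, ∀ j : Fin p,
      (S j \ ((Finset.range i).biUnion fun l => S (g l))).card ≤
        (S (g i) \ ((Finset.range i).biUnion fun l => S (g l))).card)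
    (hcover : A ⊆ (Finset.range h).biUnion fun l => S (g l))
    (hmin : ∀ i < h, ¬ A ⊆ (Finset.range i).biUnion fun l => S (g l)) :
    h ≤ k := by
  by_contra hkh
  push_neg at hkh
  set U : ℕ → Finset α := fun i => A \ ((Finset.range i).biUnion fun l => S (g l)) with hU
  have hstep : ∀ i < h, p * (U (i+1)).card ≤ q * (U i).card := by
    intro i hi
    have hUsub : U i ⊆ A := Finset.sdiff_subset
    have hinter : ∀ j : Fin p,
        S j \ ((Finset.range i).biUnion fun l => S (g l)) = S j ∩ U i := by
      intro j
      ext a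
      simp only [hU, Finset.mem_sdiff, Finset.mem_inter]
      constructor
      · intro ⟨h1, h2⟩; exact ⟨h1, hS j h1, h2⟩
      · tauto
    -- counting
    have hsum1 : (U i).card * (p - q) ≤ ∑ j : Fin p, (S j ∩ U i).card := by
      have heq : ∀ j : Fin p, (S j ∩ U i).card
          = ∑ a ∈ U i, if a ∈ S j then 1 else 0 := by
        intro j
        rw [Finset.inter_comm, ← Finset.filter_mem_eq_inter, Finset.card_filter]
      calc (U i).card * (p - q) = ∑ a ∈ U i, (p - q) := by
            rw [Finset.sum_const, smul_eq_mul]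
        _ ≤ ∑ a ∈ U i, (Finset.univ.filter fun j : Fin p => a ∈ S j).card :=
            Finset.sum_le_sum fun a ha => hcov a (hUsub ha)
        _ = ∑ a ∈ U i, ∑ j : Fin p, if a ∈ S j then 1 else 0 := by
            refine Finset.sum_congr rfl fun a _ => ?_
            rw [Finset.card_filter]
        _ = ∑ j : Fin p, ∑ a ∈ U i, if a ∈ S j then 1 else 0 := Finset.sum_comm
        _ = ∑ j : Fin p, (S j ∩ U i).card := by
            exact Finset.sum_congr rfl fun j _ => (heq j).symm
    have hmax : ∑ j : Fin p, (S j ∩ U i).card ≤ p * (S (g i) ∩ U i).card := by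
      calc ∑ j : Fin p, (S j ∩ U i).card
          ≤ ∑ _j : Fin p, (S (g i) ∩ U i).card := by
            refine Finset.sum_le_sum fun j _ => ?_
            have := hgreedy i hi j
            rwa [hinter j, hinter (g i)] at this
        _ = p * (S (g i) ∩ U i).card := by simp [Finset.sum_const, mul_comm]
    have hUsucc : U (i+1) = U i \ S (g i) := by
      ext a
      simp only [hU, Finset.mem_sdiff, Finset.mem_biUnion, Finset.mem_range,
        Nat.lt_succ_iff_lt_or_eq]
      constructor
      · rintro ⟨ha, hn⟩
        exact ⟨⟨ha, fun ⟨l, hl, hal⟩ => hn ⟨l, Or.inl hl, hal⟩⟩,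
          fun hgi => hn ⟨i, Or.inr rfl, hgi⟩⟩
      · rintro ⟨⟨ha, hn⟩, hgi⟩
        refine ⟨ha, ?_⟩
        rintro ⟨l, hl | rfl, hal⟩
        · exact hn ⟨l, hl, hal⟩
        · exact hgi hal
    have hcard : (U (i+1)).card + (S (g i) ∩ U i).card = (U i).card := by
      rw [hUsucc, Finset.inter_comm]
      exact Finset.card_sdiff_add_card_inter _ _
    have hdiff : (U (i+1)).card ≤ (U i).card := by omega
    have hqp : q ≤ p := le_of_lt hq
    nlinarith [hsum1, hmax, hcard, Nat.sub_add_cancel hqp]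
  have hpow : ∀ i ≤ h, p ^ i * (U i).card ≤ q ^ i * t := by
    intro i hi
    induction i with
    | zero => simp [hU, ht]
    | succ n ih =>
      have h1 := hstep n (by omega)
      calc p ^ (n+1) * (U (n+1)).card = p ^ n * (p * (U (n+1)).card) := by ring
        _ ≤ p ^ n * (q * (U n).card) := Nat.mul_le_mul_left _ h1
        _ = q * (p ^ n * (U n).card) := by ring
        _ ≤ q * (q ^ n * t) := Nat.mul_le_mul_left _ (ih (by omega))
        _ = q ^ (n+1) * t := by ring
  have hUk : 1 ≤ (U k).card := by
    have hne : U k ≠ ∅ := by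
      intro he
      apply hmin k hkh
      intro a ha
      by_contra hna
      have : a ∈ U k := Finset.mem_sdiff.mpr ⟨ha, hna⟩
      simp [he] at this
    exact Finset.card_pos.mpr (Finset.nonempty_iff_ne_empty.mpr hne)
  have hkey : p ^ k ≤ q ^ k * t := by
    calc p ^ k ≤ p ^ k * (U k).card := Nat.le_mul_of_pos_right _ (by omega)
      _ ≤ q ^ k * t := hpow k (le_of_lt hkh)
  have hkeyR : (p : ℝ) ^ k ≤ (q : ℝ) ^ k * t := by exact_mod_cast hkey
  have hk0 : (k : ℝ) ≠ 0 := by positivity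
  have htpos : (0 : ℝ) < t := by exact_mod_cast ht1
  have h2 : ((q : ℝ) * (t : ℝ) ^ (1 / (k : ℝ))) ^ k = (q : ℝ) ^ k * t := by
    rw [mul_pow, ← Real.rpow_natCast ((t : ℝ) ^ (1 / (k : ℝ))) k,
      ← Real.rpow_mul (le_of_lt htpos)]
    have : 1 / (k : ℝ) * k = 1 := by field_simp
    rw [this, Real.rpow_one]
  have hfin : (p : ℝ) ≤ (q : ℝ) * (t : ℝ) ^ (1 / (k : ℝ)) := by
    refine le_of_pow_le_pow_left₀ (n := k) (Nat.one_le_iff_ne_zero.mp hk) (by positivity) ?_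
    rw [h2]; exact hkeyR
  linarith
end

section
/- Let A be a finite set with |A| = t, let S_1, …, S_p be subsets of A such that every element of A lies in at least p − q of them, where 0 ≤ q < p, and suppose S_1, S_2, …, S_h is a greedy covering sequence (each S_i, among all p subsets, maximizes the number of elements not in U_{i−1} := S_1 ∪ … ∪ S_{i−1}, with U_0 = ∅). Define x_j = (q − j)/(p − j) for 0 ≤ j < p. Then for every i with 1 ≤ i ≤ h, |U_i| ≥ (1 − x_{i−1} x_{i−2} ⋯ x_1 x_0) · t. -/
/-- Let `A` be a finite set of size `t`, and `S : Fin p → Finset α`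
subsets of `A` such that every element of `A` lies in at least `p - q` of them, with
`0 ≤ q < p`.  Suppose `g 0, …, g (h-1)` is a greedy covering sequence: each chosen
subset covers the maximum possible number of elements not in the union `U_{i-1}` of the
previously chosen subsets, continuing exactly until all of `A` is covered.  With
`x_j = (q - j)/(p - j)` (as reals), for every `1 ≤ i ≤ h` we have
`|U_i| ≥ (1 - x_{i-1} x_{i-2} ⋯ x_1 x_0) · t`. -/
theorem greedy_cover_union_lower_bound
    {α : Type*} [DecidableEq α]
    (A : Finset α) (t p q : ℕ)
    (ht : A.card = t) (hq : q < p)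
    (S : Fin p → Finset α) (hS : ∀ i : Fin p, S i ⊆ A)
    (hcov : ∀ a ∈ A, p - q ≤ (Finset.univ.filter fun i : Fin p => a ∈ S i).card)
    (h : ℕ) (g : ℕ → Fin p)
    (hgreedy : ∀ i < h, ∀ j : Fin p,
      (S j \ ((Finset.range i).biUnion fun l => S (g l))).card ≤
        (S (g i) \ ((Finset.range i).biUnion fun l => S (g l))).card)
    (hcover : A ⊆ (Finset.range h).biUnion fun l => S (g l))
    (hmin : ∀ i < h, ¬ A ⊆ (Finset.range i).biUnion fun l => S (g l)) :
    ∀ i : ℕ, 1 ≤ i → i ≤ h →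
      (1 - ∏ j ∈ Finset.range i, (((q : ℝ) - (j : ℝ)) / ((p : ℝ) - (j : ℝ)))) * (t : ℝ) ≤
        ((((Finset.range i).biUnion fun l => S (g l)).card : ℕ) : ℝ) := by
  classical
  set U : ℕ → Finset α := fun i => (Finset.range i).biUnion fun l => S (g l) with hU
  have hUA : ∀ i, U i ⊆ A := by
    intro i x hx
    simp only [hU, Finset.mem_biUnion] at hx
    obtain ⟨l, _, hl⟩ := hx
    exact hS _ hl
  -- g is injective on the greedy prefix
  have hginj : ∀ i < h, ∀ l < i, g l ≠ g i := by
    intro i hi l hl hgl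
    obtain ⟨a, haA, haU⟩ := Finset.not_subset.mp (hmin i hi)
    have hpos : 0 < (Finset.univ.filter fun j : Fin p => a ∈ S j).card :=
      lt_of_lt_of_le (Nat.sub_pos_of_lt hq) (hcov a haA)
    obtain ⟨j, hj⟩ := Finset.card_pos.mp hpos
    have hjS : a ∈ S j := (Finset.mem_filter.mp hj).2
    have h1 : 1 ≤ (S j \ U i).card :=
      Finset.card_pos.mpr ⟨a, Finset.mem_sdiff.mpr ⟨hjS, haU⟩⟩
    have hsub : S (g i) ⊆ U i := by
      rw [← hgl]
      exact Finset.subset_biUnion_of_mem (fun l => S (g l)) (Finset.mem_range.mpr hl)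
    have h0 : S (g i) \ U i = ∅ := Finset.sdiff_eq_empty_iff_subset.mpr hsub
    have h2 : (S j \ U i).card ≤ (S (g i) \ U i).card := hgreedy i hi j
    rw [h0, Finset.card_empty] at h2
    omega
  -- key counting inequality
  have key : ∀ i < h, i ≤ q → (p - q) * (A \ U i).card ≤ (p - i) * (S (g i) \ U i).card := by
    intro i hi hiq
    set T : Finset (Fin p) := (Finset.range i).image g with hT
    have hTcard : T.card = i := by
      rw [hT, Finset.card_image_of_injOn, Finset.card_range]
      intro l hl m hm hlm
      simp only [Finset.mem_coe, Finset.mem_range] at hl hm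
      by_contra hne
      rcases Nat.lt_or_ge l m with hlt | hge
      · exact hginj m (hm.trans hi) l hlt hlm
      · exact hginj l (hl.trans hi) m (lt_of_le_of_ne hge (Ne.symm hne)) hlm.symm
    have hip : i < p := lt_of_le_of_lt hiq hq
    have hTc : Tᶜ.card = p - i := by
      rw [Finset.card_compl, hTcard]
      simp
    -- each S j \ U i is a filter of B := A \ U i
    set B : Finset α := A \ U i with hB
    have hSd : ∀ j : Fin p, S j \ U i = B.filter (· ∈ S j) := by
      intro j
      ext a
      simp only [hB, Finset.mem_sdiff, Finset.mem_filter]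
      exact ⟨fun ⟨h1, h2⟩ => ⟨⟨hS j h1, h2⟩, h1⟩, fun ⟨⟨_, h2⟩, h3⟩ => ⟨h3, h2⟩⟩
    -- double counting
    have hsum : B.card * (p - q) ≤ ∑ j ∈ Tᶜ, (S j \ U i).card := by
      have : ∀ j ∈ Tᶜ, (S j \ U i).card = ∑ a ∈ B, if a ∈ S j then 1 else 0 := by
        intro j _
        rw [hSd j, Finset.card_filter]
      rw [Finset.sum_congr rfl this, Finset.sum_comm]
      have hpt : ∀ a ∈ B, p - q ≤ ∑ j ∈ Tᶜ, if a ∈ S j then 1 else 0 := by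
        intro a ha
        have haA : a ∈ A := (Finset.mem_sdiff.mp ha).1
        have haU : a ∉ U i := (Finset.mem_sdiff.mp ha).2
        have hfil : Finset.univ.filter (fun j : Fin p => a ∈ S j) ⊆ Tᶜ := by
          intro j hj
          have hjS : a ∈ S j := (Finset.mem_filter.mp hj).2
          rw [Finset.mem_compl, hT]
          intro hjT
          obtain ⟨l, hl, hgl⟩ := Finset.mem_image.mp hjT
          apply haU
          simp only [hU, Finset.mem_biUnion]
          exact ⟨l, hl, hgl ▸ hjS⟩
        calc p - q ≤ (Finset.univ.filter fun j : Fin p => a ∈ S j).card := hcov a haA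
          _ = ∑ j ∈ Finset.univ.filter (fun j : Fin p => a ∈ S j), 1 := by
              rw [Finset.card_eq_sum_ones]
          _ ≤ ∑ j ∈ Tᶜ, if a ∈ S j then 1 else 0 := by
              rw [← Finset.sum_filter]
              refine Finset.sum_le_sum_of_subset fun x hx => ?_
              exact Finset.mem_filter.mpr ⟨hfil hx, (Finset.mem_filter.mp hx).2⟩
      calc B.card * (p - q) = ∑ _a ∈ B, (p - q) := by rw [Finset.sum_const, smul_eq_mul]
        _ ≤ _ := Finset.sum_le_sum hpt
    -- greedy bound on each term
    have hmax : ∑ j ∈ Tᶜ, (S j \ U i).card ≤ (p - i) * (S (g i) \ U i).card := by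
      calc ∑ j ∈ Tᶜ, (S j \ U i).card ≤ ∑ _j ∈ Tᶜ, (S (g i) \ U i).card :=
            Finset.sum_le_sum fun j _ => hgreedy i hi j
        _ = (p - i) * (S (g i) \ U i).card := by rw [Finset.sum_const, smul_eq_mul, hTc]
    calc (p - q) * B.card = B.card * (p - q) := Nat.mul_comm _ _
      _ ≤ _ := le_trans hsum hmax
  -- cardinality recursion
  have hUsucc : ∀ i, A \ U (i + 1) = (A \ U i) \ S (g i) := by
    intro i
    ext a
    simp only [hU, Finset.mem_sdiff, Finset.mem_biUnion, Finset.mem_range, Nat.lt_succ_iff]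
    constructor
    · rintro ⟨ha, hn⟩
      exact ⟨⟨ha, fun ⟨l, hl, hal⟩ => hn ⟨l, hl.le, hal⟩⟩, fun hgi => hn ⟨i, le_refl i, hgi⟩⟩
    · rintro ⟨⟨ha, hn⟩, hgi⟩
      refine ⟨ha, ?_⟩
      rintro ⟨l, hl, hal⟩
      rcases Nat.lt_or_ge l i with h' | h'
      · exact hn ⟨l, h', hal⟩
      · exact hgi (by rwa [Nat.le_antisymm hl h'] at hal)
  have hrsucc : ∀ i, (A \ U (i + 1)).card + (S (g i) \ U i).card = (A \ U i).card := by
    intro i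
    rw [hUsucc i]
    have hint : (A \ U i) ∩ S (g i) = S (g i) \ U i := by
      ext a
      simp only [Finset.mem_inter, Finset.mem_sdiff]
      exact ⟨fun ⟨⟨_, h2⟩, h3⟩ => ⟨h3, h2⟩, fun ⟨h1, h2⟩ => ⟨⟨hS _ h1, h2⟩, h1⟩⟩
    rw [← hint]
    exact Finset.card_sdiff_add_card_inter _ _
  -- real-valued one-step recursion
  have step : ∀ i < h, i ≤ q →
      ((A \ U (i + 1)).card : ℝ) ≤ (((q : ℝ) - i) / ((p : ℝ) - i)) * (A \ U i).card := by
    intro i hi hiq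
    have hip : i < p := lt_of_le_of_lt hiq hq
    have hk := key i hi hiq
    have hr := hrsucc i
    have hpi : (0 : ℝ) < (p : ℝ) - i := by
      have : (i : ℝ) < p := by exact_mod_cast hip
      linarith
    rw [div_mul_eq_mul_div, le_div_iff₀ hpi]
    have hk' : ((p : ℝ) - q) * (A \ U i).card ≤ ((p : ℝ) - i) * (S (g i) \ U i).card := by
      have := hk
      have h1 : ((p - q : ℕ) : ℝ) = (p : ℝ) - q := by
        push_cast [Nat.cast_sub hq.le]
        ring
      have h2 : ((p - i : ℕ) : ℝ) = (p : ℝ) - i := by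
        push_cast [Nat.cast_sub hip.le]
        ring
      calc ((p : ℝ) - q) * (A \ U i).card = ((p - q : ℕ) * (A \ U i).card : ℕ) := by
            push_cast [h1]; ring
        _ ≤ (((p - i : ℕ) * (S (g i) \ U i).card : ℕ) : ℝ) := by exact_mod_cast hk
        _ = ((p : ℝ) - i) * (S (g i) \ U i).card := by push_cast [h2]; ring
    have hr' : ((A \ U (i + 1)).card : ℝ) + (S (g i) \ U i).card = (A \ U i).card := by
      exact_mod_cast congrArg (Nat.cast : ℕ → ℝ) hr
    nlinarith [hr', hk']
  -- h ≤ q + 1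
  have hhq : h ≤ q + 1 := by
    by_contra hc
    push_neg at hc
    have hqh : q < h := by omega
    have := step q hqh le_rfl
    simp only [sub_self, zero_div, zero_mul] at this
    have h0 : (A \ U (q + 1)).card = 0 := by exact_mod_cast le_antisymm this (by positivity)
    exact hmin (q + 1) hc (Finset.sdiff_eq_empty_iff_subset.mp (Finset.card_eq_zero.mp h0))
  -- main induction
  have main : ∀ i ≤ h, ((A \ U i).card : ℝ) ≤
      (∏ j ∈ Finset.range i, (((q : ℝ) - (j : ℝ)) / ((p : ℝ) - (j : ℝ)))) * (t : ℝ) := by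
    intro i
    induction i with
    | zero =>
      intro _
      simp only [Finset.range_zero, Finset.prod_empty, one_mul]
      have : U 0 = ∅ := by simp [hU]
      rw [this, Finset.sdiff_empty, ht]
    | succ n ih =>
      intro hn
      have hnh : n < h := hn
      have hnq : n ≤ q := by omega
      have hx : (0 : ℝ) ≤ ((q : ℝ) - n) / ((p : ℝ) - n) := by
        have h1 : (n : ℝ) ≤ q := by exact_mod_cast hnq
        have h2 : (n : ℝ) < p := by exact_mod_cast lt_of_le_of_lt hnq hq
        apply div_nonneg <;> linarith
      have hprod : (0 : ℝ) ≤ ∏ j ∈ Finset.range n, (((q : ℝ) - (j : ℝ)) / ((p : ℝ) - (j : ℝ))) := by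
        apply Finset.prod_nonneg
        intro j hj
        have hjq : j ≤ q := by
          have := Finset.mem_range.mp hj
          omega
        have h1 : (j : ℝ) ≤ q := by exact_mod_cast hjq
        have h2 : (j : ℝ) < p := by exact_mod_cast lt_of_le_of_lt hjq hq
        apply div_nonneg <;> linarith
      calc ((A \ U (n + 1)).card : ℝ)
          ≤ (((q : ℝ) - n) / ((p : ℝ) - n)) * (A \ U n).card := step n hnh hnq
        _ ≤ (((q : ℝ) - n) / ((p : ℝ) - n)) *
            ((∏ j ∈ Finset.range n, (((q : ℝ) - (j : ℝ)) / ((p : ℝ) - (j : ℝ)))) * t) :=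
            mul_le_mul_of_nonneg_left (ih (le_of_lt hnh)) hx
        _ = (∏ j ∈ Finset.range (n + 1), (((q : ℝ) - (j : ℝ)) / ((p : ℝ) - (j : ℝ)))) * t := by
            rw [Finset.prod_range_succ]; ring
  -- conclusion
  intro i _ hih
  have hm := main i hih
  have hcard : (U i).card + (A \ U i).card = t := by
    rw [← ht]
    have := Finset.card_sdiff_add_card_eq_card (hUA i)
    omega
  have hcard' : ((U i).card : ℝ) + ((A \ U i).card : ℝ) = (t : ℝ) := by
    exact_mod_cast congrArg (Nat.cast : ℕ → ℝ) hcard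
  have : (1 - ∏ j ∈ Finset.range i, (((q : ℝ) - (j : ℝ)) / ((p : ℝ) - (j : ℝ)))) * (t : ℝ) ≤
      ((U i).card : ℝ) := by nlinarith [hm, hcard']
  exact this
end

section
/- Let c be a valid partial coloring of a bipartite edge-group instance (c is defined on a subset S of the edges and any two distinct colored edges sharing an endpoint and lying in different groups have different colors), let k ≥ 1 be an integer, and let g be a group centered at input u none of whose edges is colored. Suppose that every group centered at u other than g uses at most k distinct colors under c, and that the total number C of distinct colors used by c satisfies C > (D_i − 1)·k + (Δ_o − 1)·n_o^{1/k}. Then c can be extended to a valid partial coloring of S together with the edges of g in which every edge of g receives a color already used by c and at most k distinct colors appear on the edges of g. -/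
/-!
Let `A` be the set of colors used by `c` but not at `u`. The groups at `u` other than `g` use at
most `(D_i - 1) k` colors, so `|A| > (Δ_o - 1) n_o^{1/k}`. An edge of `g` must avoid the colors at
its output, at most `Δ_o - 1` of them, and `g` has at most `n_o` edges since they all leave `u`.
Of the `|A|^k` tuples in `A^k`, at most `(Δ_o - 1)^k` have all entries among the colors at a given
output, and `n_o (Δ_o - 1)^k < |A|^k`; hence some tuple is not contained in the forbidden colors of
any edge of `g`. Its entries form a palette of at most `k` colors from which every edge of `g`
takes a color unused at both of its endpoints.
-/

open Finset

def inputColors {I O : Type*} [DecidableEq I] (S : Finset (I × O)) (c : I × O → ℕ) (u : I) :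
    Finset ℕ :=
  {e ∈ S | e.1 = u}.image c

def outputColors {I O : Type*} [DecidableEq O] (S : Finset (I × O)) (c : I × O → ℕ) (v : O) :
    Finset ℕ :=
  {e ∈ S | e.2 = v}.image c

def maxGroupsAtInput {I O G : Type*} [Fintype I] [DecidableEq I] [DecidableEq G]
    (E : Finset (I × O)) (grp : I × O → G) : ℕ :=
  univ.sup fun u => #({e ∈ E | e.1 = u}.image grp)

def maxOutputDegree {I O : Type*} [Fintype O] [DecidableEq O] (E : Finset (I × O)) : ℕ :=
  univ.sup fun v => #{e ∈ E | e.2 = v}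

theorem exists_subset_card_le_forall_not_subset {α ι : Type*} [DecidableEq α]
    {A : Finset α} {s : Finset ι} {F : ι → Finset α} {d k : ℕ}
    (hF : ∀ i ∈ s, #(A ∩ F i) ≤ d) (hcount : #s * d ^ k < #A ^ k) :
    ∃ T ⊆ A, #T ≤ k ∧ ∀ i ∈ s, ¬T ⊆ F i := by
  have hbad : #(s.biUnion fun i => Fintype.piFinset fun _ : Fin k => A ∩ F i) < #A ^ k :=
    (card_biUnion_le_card_mul _ _ _ fun i hi => by
      simpa using Nat.pow_le_pow_left (hF i hi) k).trans_lt hcount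
  obtain ⟨x, hxA, hx⟩ := exists_mem_notMem_of_card_lt_card
    (hbad.trans_eq (Fintype.card_piFinset_const A k).symm)
  refine ⟨univ.image x, ?_, card_image_le.trans_eq (card_fin k), fun i hi hT => ?_⟩
  · simpa [image_subset_iff] using hxA
  · refine hx (mem_biUnion.2 ⟨i, hi, Fintype.mem_piFinset.2 fun j => mem_inter.2 ⟨?_, ?_⟩⟩)
    · exact Fintype.mem_piFinset.1 hxA j
    · exact hT (mem_image_of_mem x (mem_univ j))

theorem mul_pow_lt_pow_of_mul_rpow_lt {d n a : ℝ} {k : ℕ} (hk : k ≠ 0) (hd : 0 ≤ d)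
    (hn : 0 ≤ n) (h : d * n ^ (1 / (k : ℝ)) < a) : n * d ^ k < a ^ k := by
  have hroot : (n ^ (1 / (k : ℝ))) ^ k = n := by
    rw [← Real.rpow_natCast, ← Real.rpow_mul hn, one_div_mul_cancel (by exact_mod_cast hk),
      Real.rpow_one]
  calc n * d ^ k = (d * n ^ (1 / (k : ℝ))) ^ k := by rw [mul_pow, hroot, mul_comm]
    _ < a ^ k := pow_lt_pow_left₀ h (by positivity) hk

section EdgeGroups

variable {I O G : Type*} [DecidableEq G]
  {E S : Finset (I × O)} {grp : I × O → G} {c : I × O → ℕ} {g : G} {u : I} {k : ℕ}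

theorem card_group_le_card_outputs [Fintype O] (hcenter : ∀ e ∈ E, grp e = g → e.1 = u) :
    #{e ∈ E | grp e = g} ≤ Fintype.card O := by
  refine card_le_card_of_injOn Prod.snd (fun _ _ => mem_coe.2 (mem_univ _)) ?_
  intro e he e' he' h
  obtain ⟨heE, hge⟩ := mem_filter.1 (mem_coe.1 he)
  obtain ⟨he'E, hge'⟩ := mem_filter.1 (mem_coe.1 he')
  exact Prod.ext ((hcenter e heE hge).trans (hcenter e' he'E hge').symm) h

variable [DecidableEq I]

theorem card_inputColors_le (hSE : S ⊆ E) (hg : g ∈ {e ∈ E | e.1 = u}.image grp)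
    (huncolored : ∀ e ∈ S, grp e ≠ g)
    (hother : ∀ g' ≠ g, #((S.filter fun e => e.1 = u ∧ grp e = g').image c) ≤ k) :
    #(inputColors S c u) ≤ (#({e ∈ E | e.1 = u}.image grp) - 1) * k := by
  set groupsS := {e ∈ S | e.1 = u}.image grp
  have hgS : g ∉ groupsS := by
    simp only [groupsS, mem_image, mem_filter, not_exists, not_and]
    exact fun e he => huncolored e he.1
  have hcover : inputColors S c u ⊆
      groupsS.biUnion fun g' => {e ∈ S | e.1 = u ∧ grp e = g'}.image c := by
    intro x hx
    obtain ⟨e, he, rfl⟩ := mem_image.1 hx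
    exact mem_biUnion.2 ⟨grp e, mem_image_of_mem grp he,
      mem_image_of_mem c (mem_filter.2 ⟨(mem_filter.1 he).1, (mem_filter.1 he).2, rfl⟩)⟩
  have hgroups : groupsS ⊆ ({e ∈ E | e.1 = u}.image grp).erase g := fun g' hg' =>
    mem_erase.2 ⟨by rintro rfl; exact hgS hg',
      image_subset_image (filter_subset_filter _ hSE) hg'⟩
  calc #(inputColors S c u)
      ≤ #groupsS * k := (card_le_card hcover).trans <|
        card_biUnion_le_card_mul _ _ _ fun g' hg' => hother g' (by rintro rfl; exact hgS hg')
    _ ≤ (#({e ∈ E | e.1 = u}.image grp) - 1) * k := by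
        gcongr
        exact (card_le_card hgroups).trans_eq (card_erase_of_mem hg)

variable [DecidableEq O]

theorem card_outputColors_le (hSE : S ⊆ E) {e : I × O} (he : e ∈ E) (heS : e ∉ S) :
    #(outputColors S c e.2) ≤ #{e' ∈ E | e'.2 = e.2} - 1 := by
  have hsub : {e' ∈ S | e'.2 = e.2} ⊆ {e' ∈ E | e'.2 = e.2}.erase e := fun e' he' =>
    mem_erase.2 ⟨by rintro rfl; exact heS (mem_filter.1 he').1, filter_subset_filter _ hSE he'⟩
  calc #(outputColors S c e.2) ≤ #{e' ∈ S | e'.2 = e.2} := card_image_le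
    _ ≤ #{e' ∈ E | e'.2 = e.2} - 1 :=
      (card_le_card hsub).trans_eq (card_erase_of_mem (mem_filter.2 ⟨he, rfl⟩))

theorem exists_extension_of_palette {T : Finset ℕ}
    (hvalid : ∀ e ∈ S, ∀ e' ∈ S, e ≠ e' → (e.1 = e'.1 ∨ e.2 = e'.2) → grp e ≠ grp e' →
      c e ≠ c e')
    (hcenter : ∀ e ∈ E, grp e = g → e.1 = u) (huncolored : ∀ e ∈ S, grp e ≠ g)
    (hTu : Disjoint T (inputColors S c u))
    (hT : ∀ e ∈ E, grp e = g → ¬T ⊆ outputColors S c e.2) :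
    ∃ c' : I × O → ℕ, (∀ e ∈ S, c' e = c e) ∧
      (∀ e ∈ S ∪ {e ∈ E | grp e = g}, ∀ e' ∈ S ∪ {e ∈ E | grp e = g},
        e ≠ e' → (e.1 = e'.1 ∨ e.2 = e'.2) → grp e ≠ grp e' → c' e ≠ c' e') ∧
      ∀ e ∈ E, grp e = g → c' e ∈ T := by
  have hpick : ∀ e, ∃ x, e ∈ E → grp e = g → x ∈ T ∧ x ∉ outputColors S c e.2 := by
    intro e
    by_cases he : e ∈ E ∧ grp e = g
    · obtain ⟨x, hx, hxF⟩ := not_subset.1 (hT e he.1 he.2)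
      exact ⟨x, fun _ _ => ⟨hx, hxF⟩⟩
    · exact ⟨0, fun h h' => absurd ⟨h, h'⟩ he⟩
  choose col hcol using hpick
  set c' := fun e => if grp e = g then col e else c e
  have hc'S : ∀ e ∈ S, c' e = c e := fun e he => if_neg (huncolored e he)
  have hc'g : ∀ e ∈ E, grp e = g → c' e = col e := fun e _ hge => if_pos hge
  have hcross : ∀ e ∈ S, ∀ e' ∈ E, grp e' = g → (e.1 = e'.1 ∨ e.2 = e'.2) →
      c' e ≠ c' e' := by
    intro e he e' he'E hge' hshare
    obtain ⟨hT', hF'⟩ := hcol e' he'E hge'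
    rw [hc'S e he, hc'g e' he'E hge']
    rcases hshare with hin | hout
    · have : c e ∈ inputColors S c u :=
        mem_image_of_mem c (mem_filter.2 ⟨he, hin.trans (hcenter e' he'E hge')⟩)
      exact fun h => disjoint_left.1 hTu hT' (h ▸ this)
    · exact fun h => hF' (h ▸ mem_image_of_mem c (mem_filter.2 ⟨he, hout⟩))
  refine ⟨c', hc'S, ?_, fun e he hge => hc'g e he hge ▸ (hcol e he hge).1⟩
  intro e he e' he' hne hshare hgrp
  rcases mem_union.1 he with heS | heg <;> rcases mem_union.1 he' with he'S | he'g
  · rw [hc'S e heS, hc'S e' he'S]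
    exact hvalid e heS e' he'S hne hshare hgrp
  · exact hcross e heS e' (mem_filter.1 he'g).1 (mem_filter.1 he'g).2 hshare
  · exact (hcross e' he'S e (mem_filter.1 heg).1 (mem_filter.1 heg).2
      (hshare.imp Eq.symm Eq.symm)).symm
  · exact absurd ((mem_filter.1 heg).2.trans (mem_filter.1 he'g).2.symm) hgrp


theorem mul_rpow_lt_card_unused_colors [Fintype I] [Fintype O] (hSE : S ⊆ E)
    (hgu : g ∈ {e ∈ E | e.1 = u}.image grp) (huncolored : ∀ e ∈ S, grp e ≠ g)
    (hother : ∀ g' ≠ g, #((S.filter fun e => e.1 = u ∧ grp e = g').image c) ≤ k)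
    (hC : ((maxGroupsAtInput E grp : ℝ) - 1) * k +
        ((maxOutputDegree E : ℝ) - 1) * (Fintype.card O : ℝ) ^ (1 / (k : ℝ)) < #(S.image c)) :
    ((maxOutputDegree E : ℝ) - 1) * (Fintype.card O : ℝ) ^ (1 / (k : ℝ)) <
      #(S.image c \ inputColors S c u) := by
  have hsub : inputColors S c u ⊆ S.image c := image_subset_image (filter_subset _ _)
  have hDu : #({e ∈ E | e.1 = u}.image grp) ≤ maxGroupsAtInput E grp :=
    le_sup (f := fun u => #({e ∈ E | e.1 = u}.image grp)) (mem_univ u)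
  have hDu1 : 1 ≤ #({e ∈ E | e.1 = u}.image grp) := card_pos.2 ⟨g, hgu⟩
  have hin : (#(inputColors S c u) : ℝ) ≤ ((maxGroupsAtInput E grp : ℝ) - 1) * k := by
    rw [← Nat.cast_pred (hDu1.trans hDu)]
    exact_mod_cast (card_inputColors_le hSE hgu huncolored hother).trans
      (Nat.mul_le_mul_right k (Nat.sub_le_sub_right hDu 1))
  rw [card_sdiff_of_subset hsub, Nat.cast_sub (card_le_card hsub)]
  linarith

theorem exists_palette [Fintype I] [Fintype O] (hSE : S ⊆ E) (hk : k ≠ 0)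
    (hcenter : ∀ e ∈ E, grp e = g → e.1 = u) (huncolored : ∀ e ∈ S, grp e ≠ g)
    (hother : ∀ g' ≠ g, #((S.filter fun e => e.1 = u ∧ grp e = g').image c) ≤ k)
    (hC : ((maxGroupsAtInput E grp : ℝ) - 1) * k +
        ((maxOutputDegree E : ℝ) - 1) * (Fintype.card O : ℝ) ^ (1 / (k : ℝ)) < #(S.image c)) :
    ∃ T ⊆ S.image c, Disjoint T (inputColors S c u) ∧ #T ≤ k ∧
      ∀ e ∈ E, grp e = g → ¬T ⊆ outputColors S c e.2 := by
  rcases {e ∈ E | grp e = g}.eq_empty_or_nonempty with hgE | ⟨e₀, he₀⟩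
  · refine ⟨∅, empty_subset _, disjoint_empty_left _, by simp, fun e he hge => ?_⟩
    exact absurd (hgE ▸ mem_filter.2 ⟨he, hge⟩) (notMem_empty e)
  obtain ⟨he₀E, hge₀⟩ := mem_filter.1 he₀
  set A := S.image c \ inputColors S c u
  have hdeg : ∀ v, #{e ∈ E | e.2 = v} ≤ maxOutputDegree E := fun v =>
    le_sup (f := fun v => #{e ∈ E | e.2 = v}) (mem_univ v)
  have hΔ : 0 < maxOutputDegree E :=
    (card_pos.2 ⟨e₀, mem_filter.2 ⟨he₀E, rfl⟩⟩ : 0 < #{e ∈ E | e.2 = e₀.2}).trans_le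
      (hdeg e₀.2)
  have hA : ((maxOutputDegree E - 1 : ℕ) : ℝ) * (Fintype.card O : ℝ) ^ (1 / (k : ℝ)) < #A := by
    rw [Nat.cast_pred hΔ]
    exact mul_rpow_lt_card_unused_colors hSE
      (mem_image.2 ⟨e₀, mem_filter.2 ⟨he₀E, hcenter e₀ he₀E hge₀⟩, hge₀⟩) huncolored hother hC
  have hF : ∀ e ∈ {e ∈ E | grp e = g}, #(A ∩ outputColors S c e.2) ≤ maxOutputDegree E - 1 := by
    intro e he
    obtain ⟨heE, hge⟩ := mem_filter.1 he
    calc #(A ∩ outputColors S c e.2) ≤ #(outputColors S c e.2) := card_le_card inter_subset_right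
      _ ≤ #{e' ∈ E | e'.2 = e.2} - 1 :=
        card_outputColors_le hSE heE fun heS => huncolored e heS hge
      _ ≤ maxOutputDegree E - 1 := Nat.sub_le_sub_right (hdeg e.2) 1
  have hcount : #{e ∈ E | grp e = g} * (maxOutputDegree E - 1) ^ k < #A ^ k := by
    have := mul_pow_lt_pow_of_mul_rpow_lt hk (Nat.cast_nonneg _) (Nat.cast_nonneg _) hA
    exact (Nat.mul_le_mul_right _ (card_group_le_card_outputs hcenter)).trans_lt
      (by exact_mod_cast this)
  obtain ⟨T, hTA, hTk, hT⟩ := exists_subset_card_le_forall_not_subset hF hcount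
  exact ⟨T, hTA.trans sdiff_subset, disjoint_of_subset_left hTA sdiff_disjoint, hTk,
    fun e he hge => hT e (mem_filter.2 ⟨he, hge⟩)⟩

end EdgeGroups

theorem edge_group_coloring_extend_group_general
    {I O G : Type*} [Fintype I] [Fintype O]
    [DecidableEq I] [DecidableEq O] [DecidableEq G]
    (E : Finset (I × O)) (grp : I × O → G)
    (S : Finset (I × O)) (hSE : S ⊆ E) (c : I × O → ℕ)
    (hvalid : ∀ e ∈ S, ∀ e' ∈ S, e ≠ e' → (e.1 = e'.1 ∨ e.2 = e'.2) →
      grp e ≠ grp e' → c e ≠ c e')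
    (k : ℕ) (hk : 1 ≤ k) (g : G) (u : I)
    (hcenter : ∀ e ∈ E, grp e = g → e.1 = u)
    (huncolored : ∀ e ∈ S, grp e ≠ g)
    (hother : ∀ g' : G, g' ≠ g →
      ((S.filter fun e => e.1 = u ∧ grp e = g').image c).card ≤ k)
    (hC : (((Finset.univ.sup fun u' : I =>
              ((E.filter fun e => e.1 = u').image grp).card : ℕ) : ℝ) - 1) * (k : ℝ) +
          (((Finset.univ.sup fun v : O => (E.filter fun e => e.2 = v).card : ℕ) : ℝ) - 1)
            * ((Fintype.card O : ℝ) ^ (1 / (k : ℝ)))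
          < ((S.image c).card : ℝ)) :
    ∃ c' : I × O → ℕ,
      (∀ e ∈ S, c' e = c e) ∧
      (∀ e ∈ S ∪ E.filter fun e => grp e = g,
        ∀ e' ∈ S ∪ E.filter fun e => grp e = g,
        e ≠ e' → (e.1 = e'.1 ∨ e.2 = e'.2) → grp e ≠ grp e' → c' e ≠ c' e') ∧
      (∀ e ∈ E, grp e = g → c' e ∈ S.image c) ∧
      ((E.filter fun e => grp e = g).image c').card ≤ k := by
  obtain ⟨T, hTU, hTu, hTk, hT⟩ :=
    exists_palette hSE (Nat.one_le_iff_ne_zero.1 hk) hcenter huncolored hother hC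
  obtain ⟨c', hc'S, hc'valid, hc'T⟩ :=
    exists_extension_of_palette hvalid hcenter huncolored hTu hT
  refine ⟨c', hc'S, hc'valid, fun e he hge => hTU (hc'T e he hge), ?_⟩
  exact (card_le_card (image_subset_iff.2 fun e he =>
    hc'T e (mem_filter.1 he).1 (mem_filter.1 he).2)).trans hTk

/-- (Key step of the few-colors analysis.)  Let `c` be a valid partial
coloring of a bipartite edge-group instance, defined on a subset `S ⊆ E` of the edges,
let `k ≥ 1`, and let `g` be a group centered at input `u` none of whose edges is
colored.  Suppose every group centered at `u` other than `g` uses at most `k` distinct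
colors under `c`, and the total number `C` of distinct colors used by `c` satisfies
`C > (D_i - 1)·k + (Δ_o - 1)·n_o^{1/k}`.  Then `c` extends to a valid partial coloring
of `S` together with the edges of `g` in which every edge of `g` receives a color
already used by `c` and at most `k` distinct colors appear on the edges of `g`. -/
theorem edge_group_coloring_extend_group
    {I O G : Type*} [Fintype I] [Fintype O]
    [DecidableEq I] [DecidableEq O] [DecidableEq G]
    (E : Finset (I × O)) (grp : I × O → G)
    (hgrp : ∀ e ∈ E, ∀ e' ∈ E, grp e = grp e' → e.1 = e'.1)
    (S : Finset (I × O)) (hSE : S ⊆ E) (c : I × O → ℕ)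
    (hvalid : ∀ e ∈ S, ∀ e' ∈ S, e ≠ e' → (e.1 = e'.1 ∨ e.2 = e'.2) →
      grp e ≠ grp e' → c e ≠ c e')
    (k : ℕ) (hk : 1 ≤ k) (g : G) (u : I)
    (hcenter : ∀ e ∈ E, grp e = g → e.1 = u)
    (huncolored : ∀ e ∈ S, grp e ≠ g)
    (hother : ∀ g' : G, g' ≠ g →
      ((S.filter fun e => e.1 = u ∧ grp e = g').image c).card ≤ k)
    (hC : (((Finset.univ.sup fun u' : I =>
              ((E.filter fun e => e.1 = u').image grp).card : ℕ) : ℝ) - 1) * (k : ℝ) +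
          (((Finset.univ.sup fun v : O => (E.filter fun e => e.2 = v).card : ℕ) : ℝ) - 1)
            * ((Fintype.card O : ℝ) ^ (1 / (k : ℝ)))
          < ((S.image c).card : ℝ)) :
    ∃ c' : I × O → ℕ,
      (∀ e ∈ S, c' e = c e) ∧
      (∀ e ∈ S ∪ E.filter fun e => grp e = g,
        ∀ e' ∈ S ∪ E.filter fun e => grp e = g,
        e ≠ e' → (e.1 = e'.1 ∨ e.2 = e'.2) → grp e ≠ grp e' → c' e ≠ c' e') ∧
      (∀ e ∈ E, grp e = g → c' e ∈ S.image c) ∧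
      ((E.filter fun e => grp e = g).image c').card ≤ k :=
  edge_group_coloring_extend_group_general E grp S hSE c hvalid k hk g u hcenter huncolored hother
    hC
end

section
/- For all integers k ≥ 3, Δ ≥ k + 1, and C ≥ k·Δ, the following inequality holds: Σ_{i=k+1}^{Δ} binom(Δ, i) · binom(C, i) · (i/C)^{i·k} ≤ Δ · (e² / k^{k−1})^{k+1}. -/
/-!
Each term is at most `x ^ i`, where by `binom(n, i) ≤ (e n / i)^i` the base is
`x = (e Δ / i) (e C / i) (i / C)^k = e² (Δ / C) (i / C)^(k-2) ≤ e² (Δ / C)^(k-1) ≤ e² / k^(k-1)`.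
For `k ≥ 3` this last quantity `r` is at most `1`, so every term is at most `r^(k+1)`,
and there are at most `Δ` terms.
-/

open Real
open scoped Nat

lemma Nat.choose_le_exp_one_mul_div_pow (n i : ℕ) :
    (n.choose i : ℝ) ≤ (exp 1 * n / i) ^ i := by
  have hfac : (0 : ℝ) < i ! := mod_cast i.factorial_pos
  have h_exp : (i : ℝ) ^ i / i ! ≤ exp 1 ^ i := by
    rw [← exp_nat_mul, mul_one]
    exact pow_div_factorial_le_exp _ (Nat.cast_nonneg i) i
  calc (n.choose i : ℝ) ≤ (n : ℝ) ^ i / i ! := Nat.choose_le_pow_div i n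
    _ = ((i : ℝ) ^ i / i !) * (n / i) ^ i := by
        rcases i.eq_zero_or_pos with rfl | hi
        · simp
        · rw [div_pow]
          field_simp
    _ ≤ exp 1 ^ i * (n / i) ^ i := by gcongr
    _ = (exp 1 * n / i) ^ i := by rw [← mul_pow, mul_div_assoc]

lemma choose_mul_choose_mul_div_pow_le (Δ C i k : ℕ) :
    (Δ.choose i : ℝ) * C.choose i * ((i : ℝ) / C) ^ (i * k) ≤
      ((exp 1 * Δ / i) * (exp 1 * C / i) * ((i : ℝ) / C) ^ k) ^ i := by
  rw [mul_pow, mul_pow, mul_comm i k, pow_mul]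
  gcongr
  · exact Nat.choose_le_exp_one_mul_div_pow Δ i
  · exact Nat.choose_le_exp_one_mul_div_pow C i

lemma exp_one_mul_div_mul_div_pow_le {x d c : ℝ} {k : ℕ} (hk : 2 ≤ k) (hx : 0 < x)
    (hxd : x ≤ d) (hdc : k * d ≤ c) :
    (exp 1 * d / x) * (exp 1 * c / x) * (x / c) ^ k ≤ exp 1 ^ 2 / (k : ℝ) ^ (k - 1) := by
  obtain ⟨m, rfl⟩ := Nat.exists_eq_add_of_le' hk
  have hk0 : (0 : ℝ) < (m + 2 : ℕ) := by positivity
  have hd : 0 < d := hx.trans_le hxd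
  have hc : 0 < c := lt_of_lt_of_le (by positivity) hdc
  have hdc' : d / c ≤ 1 / (m + 2 : ℕ) := by
    rw [div_le_div_iff₀ hc hk0]
    linarith
  calc (exp 1 * d / x) * (exp 1 * c / x) * (x / c) ^ (m + 2)
      = exp 1 ^ 2 * (d / c) * (x / c) ^ m := by
        rw [pow_add]
        field_simp
    _ ≤ exp 1 ^ 2 * (d / c) * (d / c) ^ m := by gcongr
    _ = exp 1 ^ 2 * (d / c) ^ (m + 1) := by ring
    _ ≤ exp 1 ^ 2 * (1 / (m + 2 : ℕ)) ^ (m + 1) := by gcongr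
    _ = exp 1 ^ 2 / ((m + 2 : ℕ) : ℝ) ^ (m + 2 - 1) := by
        rw [show m + 2 - 1 = m + 1 by omega, one_div_pow, mul_one_div]

lemma exp_one_sq_div_pow_pred_le_one {k : ℕ} (hk : 3 ≤ k) :
    exp 1 ^ 2 / (k : ℝ) ^ (k - 1) ≤ 1 := by
  have he : exp 1 ^ 2 < 9 := by nlinarith [exp_one_lt_d9, exp_pos 1]
  have hk9 : (9 : ℝ) ≤ (k : ℝ) ^ (k - 1) :=
    calc (9 : ℝ) = 3 ^ 2 := by norm_num
      _ ≤ (k : ℝ) ^ 2 := by gcongr; exact_mod_cast hk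
      _ ≤ (k : ℝ) ^ (k - 1) := pow_le_pow_right₀ (by exact_mod_cast (by omega : 1 ≤ k)) (by omega)
  rw [div_le_one (by positivity)]
  linarith

theorem random_menu_sum_estimate_general
    (k Δ C : ℕ) (hk : 3 ≤ k) (hC : k * Δ ≤ C) :
    ∑ i ∈ Finset.Icc (k + 1) Δ,
        (Δ.choose i : ℝ) * (C.choose i : ℝ) * (((i : ℝ) / (C : ℝ)) ^ (i * k)) ≤
      (Δ : ℝ) * ((Real.exp 1 ^ 2 / (k : ℝ) ^ (k - 1)) ^ (k + 1)) := by
  set r := exp 1 ^ 2 / (k : ℝ) ^ (k - 1)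
  have hr1 : r ≤ 1 := exp_one_sq_div_pow_pred_le_one hk
  have hterm : ∀ i ∈ Finset.Icc (k + 1) Δ,
      (Δ.choose i : ℝ) * C.choose i * ((i : ℝ) / C) ^ (i * k) ≤ r ^ (k + 1) := by
    intro i hi
    obtain ⟨hki, hiΔ⟩ := Finset.mem_Icc.mp hi
    have hbase : exp 1 * Δ / i * (exp 1 * C / i) * ((i : ℝ) / C) ^ k ≤ r :=
      exp_one_mul_div_mul_div_pow_le (by omega) (by norm_cast; omega) (by exact_mod_cast hiΔ)
        (by exact_mod_cast hC)
    calc _ ≤ _ := choose_mul_choose_mul_div_pow_le Δ C i k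
      _ ≤ r ^ i := pow_le_pow_left₀ (by positivity) hbase i
      _ ≤ r ^ (k + 1) := pow_le_pow_of_le_one (by positivity) hr1 hki
  have hcard : ((Finset.Icc (k + 1) Δ).card : ℝ) ≤ Δ := by
    rw [Nat.card_Icc]
    exact_mod_cast (by omega : Δ + 1 - (k + 1) ≤ Δ)
  calc _ ≤ (Finset.Icc (k + 1) Δ).card • r ^ (k + 1) := Finset.sum_le_card_nsmul _ _ _ hterm
    _ ≤ (Δ : ℝ) * r ^ (k + 1) := by
        rw [nsmul_eq_mul]
        gcongr

/-- For all integers `k ≥ 3`, `Δ ≥ k + 1`, and `C ≥ k·Δ`: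
`Σ_{i=k+1}^{Δ} binom(Δ, i) · binom(C, i) · (i/C)^{i·k} ≤ Δ · (e² / k^{k-1})^{k+1}`,
where `e` is Euler's number and the inequality is over the reals. -/
theorem random_menu_sum_estimate
    (k Δ C : ℕ) (hk : 3 ≤ k) (hΔ : k + 1 ≤ Δ) (hC : k * Δ ≤ C) :
    ∑ i ∈ Finset.Icc (k + 1) Δ,
        (Δ.choose i : ℝ) * (C.choose i : ℝ) * (((i : ℝ) / (C : ℝ)) ^ (i * k)) ≤
      (Δ : ℝ) * ((Real.exp 1 ^ 2 / (k : ℝ) ^ (k - 1)) ^ (k + 1)) :=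
  random_menu_sum_estimate_general k Δ C hk hC
end
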